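/- Suppose for each frame r, the J-slot Lyapunov drift satisfies Δ_J(rJ) = (1/2)q((r+1)J+1)² (queue reset to 0 at frame start) and Δ_J(rJ) ≤ U·J² + V_r·J·g_r, and the queue satisfies ∑_{m=rJ+1}^{(r+1)J} y(m) ≤ q((r+1)J+1). Then with y(m) = e(m) - αB/M and M = RJ, the total energy consumption satisfies ∑_{m=1}^{M} e(m) ≤ αB + ∑_{r=0}^{R-1} √(2UJ² + 2V_r·J·g_r). -/

import Mathlib

/-! Since the queue is reset at the start of frame `r`, the drift bound controls its value at
the end of the frame, `q ≤ √(2 (U J² + V_r J g_r))`, and `q` bounds the frame's total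
deviation `∑ y(m)`. Summed over the `R` frames, the deviations add up to `∑ e(m) - αB`, the
per-task share `αB / (RJ)` being subtracted `RJ` times. -/

open Finset

theorem Finset.sum_Icc_one_mul_eq_sum_range {M : Type*} [AddCommMonoid M] (f : ℕ → M)
    (n J : ℕ) :
    ∑ m ∈ Icc 1 (n * J), f m = ∑ r ∈ range n, ∑ m ∈ Icc (r * J + 1) ((r + 1) * J), f m := by
  induction n with
  | zero => simp
  | succ n ih =>
    have hIcc_one : ∀ b, Icc 1 b = Ioc 0 b := Icc_add_one_left_eq_Ioc 0
    simp only [hIcc_one, Icc_add_one_left_eq_Ioc] at ih ⊢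
    rw [sum_range_succ, ← ih, sum_Ioc_consecutive f (Nat.zero_le _)
      (Nat.mul_le_mul_right J n.le_succ)]

theorem Real.le_sqrt_two_mul_of_half_sq_le {x a : ℝ} (h : 1 / 2 * x ^ 2 ≤ a) :
    x ≤ √(2 * a) :=
  Real.le_sqrt_of_sq_le (by linarith)

theorem Finset.sum_Icc_one_sub_div_eq {N : ℕ} (hN : N ≠ 0) (e : ℕ → ℝ) (c : ℝ) :
    ∑ m ∈ Icc 1 N, (e m - c / N) = ∑ m ∈ Icc 1 N, e m - c := by
  rw [sum_sub_distrib, sum_const, Nat.card_Icc, Nat.add_sub_cancel, nsmul_eq_mul,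
    mul_div_cancel₀ _ (Nat.cast_ne_zero.mpr hN)]

theorem stmt6_general (R J : ℕ) (hR : 1 ≤ R) (hJ : 1 ≤ J)
    (q e g V : ℕ → ℝ) (U α B : ℝ)
    -- queue reset at the start of each frame, so the J-slot drift of frame r equals
    -- (1/2) q((r+1)J+1)^2, which is bounded by U J^2 + V_r J g_r
    (hdrift : ∀ r < R,
      (1 / 2) * q ((r + 1) * J + 1) ^ 2 ≤ U * (J : ℝ) ^ 2 + V r * (J : ℝ) * g r)
    -- queue bound on the accumulated energy deviation y(m) = e(m) - αB/(RJ)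
    (hy : ∀ r < R,
      ∑ m ∈ Finset.Icc (r * J + 1) ((r + 1) * J), (e m - α * B / ((R : ℝ) * (J : ℝ)))
        ≤ q ((r + 1) * J + 1)) :
    ∑ m ∈ Finset.Icc 1 (R * J), e m
      ≤ α * B + ∑ r ∈ Finset.range R,
          Real.sqrt (2 * U * (J : ℝ) ^ 2 + 2 * V r * (J : ℝ) * g r) := by
  have hRJ : R * J ≠ 0 := Nat.mul_ne_zero (by omega) (by omega)
  have hframe : ∀ r ∈ range R,
      ∑ m ∈ Icc (r * J + 1) ((r + 1) * J), (e m - α * B / ((R * J : ℕ) : ℝ))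
        ≤ √(2 * U * (J : ℝ) ^ 2 + 2 * V r * (J : ℝ) * g r) := by
    intro r hr
    have hr := mem_range.mp hr
    calc _ ≤ q ((r + 1) * J + 1) := by simpa only [Nat.cast_mul] using hy r hr
      _ ≤ _ := by
        rw [show 2 * U * (J : ℝ) ^ 2 + 2 * V r * J * g r = 2 * (U * J ^ 2 + V r * J * g r) by
          ring]
        exact Real.le_sqrt_two_mul_of_half_sq_le (hdrift r hr)
  have hdev := sum_le_sum hframe
  rw [← sum_Icc_one_mul_eq_sum_range, sum_Icc_one_sub_div_eq hRJ] at hdev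
  linarith

theorem stmt6 (R J : ℕ) (hR : 1 ≤ R) (hJ : 1 ≤ J)
    (q e g V : ℕ → ℝ) (U α B : ℝ)
    (hU : 0 ≤ U) (hV : ∀ r < R, 0 < V r) (hg : ∀ r < R, 0 ≤ g r)
    (hq : ∀ m, 0 ≤ q m)
    -- queue reset at the start of each frame, so the J-slot drift of frame r equals
    -- (1/2) q((r+1)J+1)^2, which is bounded by U J^2 + V_r J g_r
    (hdrift : ∀ r < R,
      (1 / 2) * q ((r + 1) * J + 1) ^ 2 ≤ U * (J : ℝ) ^ 2 + V r * (J : ℝ) * g r)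
    -- queue bound on the accumulated energy deviation y(m) = e(m) - αB/(RJ)
    (hy : ∀ r < R,
      ∑ m ∈ Finset.Icc (r * J + 1) ((r + 1) * J), (e m - α * B / ((R : ℝ) * (J : ℝ)))
        ≤ q ((r + 1) * J + 1)) :
    ∑ m ∈ Finset.Icc 1 (R * J), e m
      ≤ α * B + ∑ r ∈ Finset.range R,
          Real.sqrt (2 * U * (J : ℝ) ^ 2 + 2 * V r * (J : ℝ) * g r) :=
  stmt6_general R J hR hJ q e g V U α B hdrift hy
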